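/- arXiv:2112.07108 — 11 statements merged into one kernel-verified Lean document; each statement's English description precedes it below -/
import Mathlib

section
/- Let 0 < λ₂ ≤ λ_N be real numbers. Consider, for real parameters ε₀, ε₁, θ₀ and for λ ∈ {λ₂, λ_N}, the quadratic polynomial p(z, λ) = z² + (ε₀λ − 1 − θ₀)z + (ε₁λ + θ₀) over ℂ. Then the set of all r ≥ 0 such that there exist real ε₀, ε₁, θ₀ for which every complex root of p(z, λ₂) and every complex root of p(z, λ_N) has modulus at most r, has a least element, and this least element equals (√λ_N − √λ₂)/(√λ_N + √λ₂). -/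
/-!
If the roots `z, w` of `z² + b z + c` (real `b, c`) lie in the closed disc of radius `r ≤ 1`, then
`1 + b + c = (1 - z)(1 - w)` lies in `[(1 - r)², (1 + r)²]`: for real roots each factor lies in
`[1 - r, 1 + r]`, and for a conjugate pair `1 + b + c = |1 - z|²`. At `λ` this value is
`(ε₀ + ε₁) λ`, so a common radius `r < 1` for `λ₂` and `λ_N` forces `(1 - r)² λ_N ≤ (1 + r)² λ₂`,
i.e. `r ≥ R := (√λ_N - √λ₂)/(√λ_N + √λ₂)`. Conversely `ε₀ = 4/(√λ₂ + √λ_N)²`, `ε₁ = 0`, `θ₀ = R²`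
give a double root at `R` for `λ₂` and at `-R` for `λ_N`.
-/

open ComplexConjugate

theorem exists_quadratic_root (b c : ℂ) : ∃ z : ℂ, z ^ 2 + b * z + c = 0 := by
  obtain ⟨s, hs⟩ := IsAlgClosed.exists_eq_mul_self (b ^ 2 - 4 * c)
  exact ⟨(-b + s) / 2, by linear_combination (-1 / 4 : ℂ) * hs⟩

section Quadratic

variable {b c z : ℂ}

theorem quadratic_root_neg_sub (hz : z ^ 2 + b * z + c = 0) :
    (-b - z) ^ 2 + b * (-b - z) + c = 0 := by
  linear_combination hz

theorem one_add_add_eq_mul_of_quadratic_root (hz : z ^ 2 + b * z + c = 0) :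
    1 + b + c = (1 - z) * (1 - (-b - z)) := by
  linear_combination hz

end Quadratic

section RealQuadratic

variable {b c r : ℝ}

theorem one_add_add_eq_re_mul {z : ℂ} (hz : z ^ 2 + (b : ℂ) * z + (c : ℂ) = 0) :
    1 + b + c = ((1 - z) * (1 - (-b - z))).re := by
  rw [← one_add_add_eq_mul_of_quadratic_root hz]
  simp

theorem one_add_add_le_sq_of_norm_root_le
    (h : ∀ z : ℂ, z ^ 2 + (b : ℂ) * z + (c : ℂ) = 0 → ‖z‖ ≤ r) :
    1 + b + c ≤ (1 + r) ^ 2 := by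
  obtain ⟨z, hz⟩ := exists_quadratic_root (b : ℂ) c
  have factor_le : ∀ w : ℂ, w ^ 2 + (b : ℂ) * w + (c : ℂ) = 0 → ‖1 - w‖ ≤ 1 + r := fun w hw ↦
    (norm_sub_le 1 w).trans (by simpa using h w hw)
  calc 1 + b + c ≤ ‖(1 - z) * (1 - (-b - z))‖ :=
        (one_add_add_eq_re_mul hz).trans_le (Complex.re_le_norm _)
    _ = ‖1 - z‖ * ‖1 - (-b - z)‖ := norm_mul _ _
    _ ≤ (1 + r) ^ 2 := by
      rw [sq]
      exact mul_le_mul (factor_le z hz) (factor_le _ (quadratic_root_neg_sub hz))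
        (norm_nonneg _) ((norm_nonneg _).trans (factor_le z hz))

theorem sq_one_sub_le_one_sub_mul_one_sub {x y r : ℝ} (hr : r ≤ 1) (hx : |x| ≤ r) (hy : |y| ≤ r) :
    (1 - r) ^ 2 ≤ (1 - x) * (1 - y) := by
  rw [sq]
  exact mul_le_mul (by linarith [le_abs_self x]) (by linarith [le_abs_self y]) (by linarith)
    (by linarith [le_abs_self x])

theorem sq_one_sub_le_one_add_add_of_norm_root_le (hr : r ≤ 1)
    (h : ∀ z : ℂ, z ^ 2 + (b : ℂ) * z + (c : ℂ) = 0 → ‖z‖ ≤ r) :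
    (1 - r) ^ 2 ≤ 1 + b + c := by
  obtain ⟨z, hz⟩ := exists_quadratic_root (b : ℂ) c
  have hw := quadratic_root_neg_sub hz
  rw [one_add_add_eq_re_mul hz]
  by_cases hz_real : z.im = 0
  · rw [Complex.mul_re]
    simp only [Complex.sub_re, Complex.one_re, Complex.neg_re, Complex.ofReal_re, Complex.sub_im,
      Complex.one_im, hz_real, zero_mul, sub_zero]
    exact sq_one_sub_le_one_sub_mul_one_sub hr ((Complex.abs_re_le_norm z).trans (h z hz))
      (by simpa using (Complex.abs_re_le_norm _).trans (h _ hw))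
  · -- a non-real root forces `b = -2 re z`, so the other root `-b - z` is `conj z`
    have hb : b = -2 * z.re := by
      have him : z.im * (b + 2 * z.re) = 0 := by
        linear_combination (by simpa [sq] using congrArg Complex.im hz : _ = _)
      linarith [(mul_eq_zero.mp him).resolve_left hz_real]
    have hw_conj : -(b : ℂ) - z = conj z := by
      apply Complex.ext
      · simp [hb]; ring
      · simp
    have hnorm : 1 - r ≤ ‖1 - z‖ := by
      linarith [norm_sub_norm_le (1 : ℂ) z, norm_one (α := ℂ), h z hz]
    rw [hw_conj, show 1 - conj z = conj (1 - z) by simp, Complex.mul_conj, Complex.ofReal_re,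
      Complex.normSq_eq_norm_sq]
    exact pow_le_pow_left₀ (by linarith) hnorm 2

end RealQuadratic

theorem norm_eq_abs_of_double_root {b c s : ℝ} (hb : b = -2 * s) (hc : c = s ^ 2) {z : ℂ}
    (hz : z ^ 2 + (b : ℂ) * z + (c : ℂ) = 0) : ‖z‖ = |s| := by
  subst hb hc
  have hsq : (z - s) ^ 2 = 0 := by push_cast at hz; linear_combination hz
  rw [sub_eq_zero.mp (pow_eq_zero_iff two_ne_zero |>.mp hsq), Complex.norm_real, Real.norm_eq_abs]

theorem div_le_of_sq_mul_le_sq_mul {p q r : ℝ} (hp : 0 < p) (hq : 0 ≤ q) (hr : 0 ≤ r)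
    (h : (1 - r) ^ 2 * q ^ 2 ≤ (1 + r) ^ 2 * p ^ 2) : (q - p) / (q + p) ≤ r := by
  rw [← mul_pow, ← mul_pow] at h
  have := le_of_sq_le_sq h (by positivity)
  rw [div_le_iff₀ (by linarith)]
  linarith

/-- For 0 < λ₂ ≤ λ_N, the set of radii r ≥ 0 achievable by the one-tap
memory scheme (all roots of p(z,λ₂) and p(z,λ_N) have modulus ≤ r for some choice of
parameters ε₀, ε₁, θ₀) has a least element, equal to (√λ_N − √λ₂)/(√λ_N + √λ₂). -/
theorem stmt_0 (lam2 lamN : ℝ) (h2 : 0 < lam2) (h2N : lam2 ≤ lamN) :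
    IsLeast
      {r : ℝ | 0 ≤ r ∧ ∃ ε₀ ε₁ θ₀ : ℝ,
        (∀ z : ℂ, z ^ 2 + ((ε₀ * lam2 - 1 - θ₀ : ℝ) : ℂ) * z + ((ε₁ * lam2 + θ₀ : ℝ) : ℂ) = 0 →
          ‖z‖ ≤ r) ∧
        (∀ z : ℂ, z ^ 2 + ((ε₀ * lamN - 1 - θ₀ : ℝ) : ℂ) * z + ((ε₁ * lamN + θ₀ : ℝ) : ℂ) = 0 →
          ‖z‖ ≤ r)}
      ((Real.sqrt lamN - Real.sqrt lam2) / (Real.sqrt lamN + Real.sqrt lam2)) := by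
  have hN : 0 < lamN := h2.trans_le h2N
  set p := Real.sqrt lam2 with hp_def
  set q := Real.sqrt lamN with hq_def
  have hp : 0 < p := Real.sqrt_pos.mpr h2
  have hq : 0 < q := Real.sqrt_pos.mpr hN
  have hpq : p ≤ q := Real.sqrt_le_sqrt h2N
  have hR0 : 0 ≤ (q - p) / (q + p) := div_nonneg (by linarith) (by linarith)
  have hR1 : (q - p) / (q + p) < 1 := by rw [div_lt_one (by linarith)]; linarith
  rw [← Real.sq_sqrt h2.le, ← Real.sq_sqrt hN.le, ← hp_def, ← hq_def]
  refine ⟨⟨hR0, 4 / (p + q) ^ 2, 0, ((q - p) / (q + p)) ^ 2, fun z hz ↦ ?_, fun z hz ↦ ?_⟩, ?_⟩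
  · refine (norm_eq_abs_of_double_root (s := (q - p) / (q + p)) ?_ (by ring) hz).trans_le
      (abs_of_nonneg hR0).le
    field_simp
    ring
  · refine (norm_eq_abs_of_double_root (s := -((q - p) / (q + p))) ?_ (by ring) hz).trans_le
      (by rw [abs_neg, abs_of_nonneg hR0])
    field_simp
    ring
  · rintro r ⟨hr, ε₀, ε₁, θ₀, h₂, h_N⟩
    rcases le_or_gt 1 r with hr1 | hr1
    · exact hR1.le.trans hr1
    have lower := sq_one_sub_le_one_add_add_of_norm_root_le hr1.le h₂
    have upper := one_add_add_le_sq_of_norm_root_le h_N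
    apply div_le_of_sq_mul_le_sq_mul hp hq.le hr
    nlinarith [mul_le_mul_of_nonneg_right lower (sq_nonneg q),
      mul_le_mul_of_nonneg_right upper (sq_nonneg p)]
end

section
/- Let 0 < λ₂ ≤ λ_N be real numbers and let ε₀, ε₁, θ₀ be any real numbers. Define p(z, λ) = z² + (ε₀λ − 1 − θ₀)z + (ε₁λ + θ₀). Then the maximum of the moduli of the complex roots of p(z, λ₂) and of p(z, λ_N) is at least (√λ_N − √λ₂)/(√λ_N + √λ₂). -/
/-!
Write a quadratic `p(z, λ)` as `(z - α)(z - β)`. Its value at `z = 1` is `(ε₀ + ε₁) λ`,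
independent of `θ₀`. If every root of `p(·, λ₂)` and of `p(·, λ_N)` had modulus `< r ≤ 1`,
then `(1 - r)² < |p(1, λ₂)|` and `|p(1, λ_N)| < (1 + r)²`, so
`(1 - r)² λ_N < |ε₀ + ε₁| λ₂ λ_N < (1 + r)² λ₂`. For `r = (√λ_N − √λ₂)/(√λ_N + √λ₂)`
this contradicts `(1 - r) √λ_N = (1 + r) √λ₂`.
-/

open Polynomial in
theorem IsAlgClosed.exists_sq_add_mul_add_eq_mul {K : Type*} [Field K] [IsAlgClosed K] (b c : K) :
    ∃ α β : K, ∀ z, z ^ 2 + b * z + c = (z - α) * (z - β) := by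
  obtain ⟨α, hα⟩ := IsAlgClosed.exists_root (X ^ 2 + C b * X + C c)
    (by rw [show degree (X ^ 2 + C b * X + C c) = 2 by compute_degree!]; decide)
  refine ⟨α, -b - α, fun z => ?_⟩
  simp only [IsRoot, eval_add, eval_pow, eval_mul, eval_C, eval_X] at hα
  linear_combination hα

section NormBounds

variable {𝕜 : Type*} [NormedDivisionRing 𝕜] {α β : 𝕜} {r : ℝ}

theorem one_sub_sq_lt_norm_one_sub_mul_one_sub (hr : r ≤ 1) (hα : ‖α‖ < r) (hβ : ‖β‖ < r) :
    (1 - r) ^ 2 < ‖(1 - α) * (1 - β)‖ := by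
  have lower : ∀ γ : 𝕜, 1 - ‖γ‖ ≤ ‖1 - γ‖ := fun γ => by
    simpa using norm_sub_norm_le (1 : 𝕜) γ
  rw [norm_mul, sq]
  exact mul_lt_mul'' ((lower α).trans_lt' (by linarith)) ((lower β).trans_lt' (by linarith))
    (by linarith) (by linarith)

theorem norm_one_sub_mul_one_sub_lt_one_add_sq (hα : ‖α‖ < r) (hβ : ‖β‖ < r) :
    ‖(1 - α) * (1 - β)‖ < (1 + r) ^ 2 := by
  have upper : ∀ γ : 𝕜, ‖1 - γ‖ ≤ 1 + ‖γ‖ := fun γ => by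
    simpa using norm_sub_le (1 : 𝕜) γ
  rw [norm_mul, sq]
  exact mul_lt_mul'' ((upper α).trans_lt (by linarith)) ((upper β).trans_lt (by linarith))
    (norm_nonneg _) (norm_nonneg _)

end NormBounds

theorem norm_eval_one_bounds_of_roots_norm_lt {ε₀ ε₁ θ₀ lam r : ℝ} (hlam : 0 ≤ lam) (hr : r ≤ 1)
    (hroots : ∀ z : ℂ,
      z ^ 2 + ((ε₀ * lam - 1 - θ₀ : ℝ) : ℂ) * z + ((ε₁ * lam + θ₀ : ℝ) : ℂ) = 0 → ‖z‖ < r) :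
    (1 - r) ^ 2 < |ε₀ + ε₁| * lam ∧ |ε₀ + ε₁| * lam < (1 + r) ^ 2 := by
  obtain ⟨α, β, hfactor⟩ := IsAlgClosed.exists_sq_add_mul_add_eq_mul
    ((ε₀ * lam - 1 - θ₀ : ℝ) : ℂ) ((ε₁ * lam + θ₀ : ℝ) : ℂ)
  have hα : ‖α‖ < r := hroots α (by rw [hfactor]; ring)
  have hβ : ‖β‖ < r := hroots β (by rw [hfactor]; ring)
  have eval_one : ‖(1 - α) * (1 - β)‖ = |ε₀ + ε₁| * lam := by
    have h := hfactor 1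
    push_cast at h
    rw [← h, show (1 : ℂ) ^ 2 + (ε₀ * lam - 1 - θ₀) * 1 + (ε₁ * lam + θ₀) =
      (((ε₀ + ε₁) * lam : ℝ) : ℂ) by push_cast; ring,
      Complex.norm_real, Real.norm_eq_abs, abs_mul, abs_of_nonneg hlam]
  rw [← eval_one]
  exact ⟨one_sub_sq_lt_norm_one_sub_mul_one_sub hr hα hβ,
    norm_one_sub_mul_one_sub_lt_one_add_sq hα hβ⟩

theorem one_sub_sq_mul_eq_one_add_sq_mul {a b : ℝ} (ha : 0 < a) (hb : 0 ≤ b) :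
    (1 - (√b - √a) / (√b + √a)) ^ 2 * b = (1 + (√b - √a) / (√b + √a)) ^ 2 * a := by
  have hsum : 0 < √b + √a := by positivity
  field_simp
  linear_combination (4 * b) * Real.sq_sqrt ha.le - (4 * a) * Real.sq_sqrt hb

/-- For any parameters ε₀, ε₁, θ₀, the maximum root modulus of
p(z, λ₂) and p(z, λ_N) is at least (√λ_N − √λ₂)/(√λ_N + √λ₂): some root of one of
the two quadratics has modulus at least that value. -/
theorem stmt_1 (lam2 lamN : ℝ) (h2 : 0 < lam2) (h2N : lam2 ≤ lamN)
    (ε₀ ε₁ θ₀ : ℝ) :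
    ∃ z : ℂ,
      (z ^ 2 + ((ε₀ * lam2 - 1 - θ₀ : ℝ) : ℂ) * z + ((ε₁ * lam2 + θ₀ : ℝ) : ℂ) = 0 ∨
       z ^ 2 + ((ε₀ * lamN - 1 - θ₀ : ℝ) : ℂ) * z + ((ε₁ * lamN + θ₀ : ℝ) : ℂ) = 0) ∧
      (Real.sqrt lamN - Real.sqrt lam2) / (Real.sqrt lamN + Real.sqrt lam2) ≤ ‖z‖ := by
  set r := (Real.sqrt lamN - Real.sqrt lam2) / (Real.sqrt lamN + Real.sqrt lam2) with hr_def
  by_contra! hsmall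
  have hN : 0 ≤ lamN := h2.le.trans h2N
  have hr : r ≤ 1 := by
    rw [div_le_one (by positivity)]
    linarith [Real.sqrt_nonneg lam2]
  have bounds2 := norm_eval_one_bounds_of_roots_norm_lt (θ₀ := θ₀) h2.le hr
    fun z hz => hsmall z (Or.inl hz)
  have boundsN := norm_eval_one_bounds_of_roots_norm_lt (θ₀ := θ₀) hN hr
    fun z hz => hsmall z (Or.inr hz)
  have key := one_sub_sq_mul_eq_one_add_sq_mul h2 hN
  rw [← hr_def] at key
  nlinarith [mul_le_mul_of_nonneg_right bounds2.1.le hN,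
    mul_lt_mul_of_pos_right boundsN.2 h2]
end

section
/- Let 0 < λ₂ ≤ λ_N be real numbers. Set r* = (√λ_N − √λ₂)/(√λ_N + √λ₂), ε₀* = 4/(√λ_N + √λ₂)², ε₁* = 0, θ₀* = (r*)². Then for every λ with λ₂ ≤ λ ≤ λ_N, every complex root of the quadratic z² + (ε₀*λ − 1 − θ₀*)z + θ₀* has modulus at most r*. -/
/-!
With `r = r*`, the choice of `ε₀*` gives
`ε₀* λ₂ = (1 - r)²` and `ε₀* λ_N = (1 + r)²`, so for `μ = ε₀* λ` in between the discriminant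
`(μ - 1 - r²)² - 4 r² = (μ - (1 - r)²) (μ - (1 + r)²)` is nonpositive. A monic real quadratic with
nonpositive discriminant has complex conjugate (or a double real) roots, whose modulus squared
is the constant term `r²`.
-/

open Set

theorem Complex.sq_norm_eq_of_discrim_nonpos {b c : ℝ} (hdisc : discrim 1 b c ≤ 0) {z : ℂ}
    (hz : z ^ 2 + (b : ℂ) * z + (c : ℂ) = 0) : ‖z‖ ^ 2 = c := by
  rw [discrim] at hdisc
  have hre : z.re ^ 2 - z.im ^ 2 + b * z.re + c = 0 := by
    simpa [pow_two] using congrArg Complex.re hz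
  have him : z.im * (2 * z.re + b) = 0 := by
    have := congrArg Complex.im hz
    simp only [pow_two, Complex.add_im, Complex.mul_im, Complex.ofReal_re, Complex.ofReal_im,
      Complex.zero_im] at this
    linarith
  rw [Complex.sq_norm, Complex.normSq_apply]
  -- either way the real part is `-b/2`: for a real root because the discriminant vanishes
  have hmid : 2 * z.re + b = 0 := by
    rcases mul_eq_zero.mp him with him0 | hmid
    · rw [him0] at hre
      nlinarith [sq_nonneg (2 * z.re + b)]
    · exact hmid
  have hx : z.re = -b / 2 := by linarith
  rw [hx] at hre ⊢
  nlinarith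

theorem discrim_nonpos_of_mem_Icc {r μ : ℝ} (hμ : μ ∈ Icc ((1 - r) ^ 2) ((1 + r) ^ 2)) :
    discrim 1 (μ - 1 - r ^ 2) (r ^ 2) ≤ 0 := by
  have hfactor : discrim 1 (μ - 1 - r ^ 2) (r ^ 2) = (μ - (1 - r) ^ 2) * (μ - (1 + r) ^ 2) := by
    rw [discrim]; ring
  rw [hfactor]
  exact mul_nonpos_of_nonneg_of_nonpos (sub_nonneg.mpr hμ.1) (sub_nonpos.mpr hμ.2)

theorem four_div_sq_add_sqrt_mul_mem_Icc {a b lam : ℝ} (ha : 0 < a) (hab : a ≤ b)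
    (hlam : lam ∈ Icc a b) :
    4 / (√b + √a) ^ 2 * lam ∈
      Icc ((1 - (√b - √a) / (√b + √a)) ^ 2) ((1 + (√b - √a) / (√b + √a)) ^ 2) := by
  have hsum : 0 < √b + √a := add_pos_of_nonneg_of_pos (Real.sqrt_nonneg b) (Real.sqrt_pos.mpr ha)
  have hlow : 4 / (√b + √a) ^ 2 * a = (1 - (√b - √a) / (√b + √a)) ^ 2 := by
    nth_rewrite 2 [← Real.sq_sqrt ha.le]
    field_simp
    ring
  have hhigh : 4 / (√b + √a) ^ 2 * b = (1 + (√b - √a) / (√b + √a)) ^ 2 := by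
    nth_rewrite 2 [← Real.sq_sqrt (ha.le.trans hab)]
    field_simp
    ring
  have hstep : 0 ≤ 4 / (√b + √a) ^ 2 := by positivity
  rw [← hlow, ← hhigh]
  exact ⟨mul_le_mul_of_nonneg_left hlam.1 hstep, mul_le_mul_of_nonneg_left hlam.2 hstep⟩

/-- With the optimal one-tap parameters, for every λ ∈ [λ₂, λ_N] every
complex root of z² + (ε₀*λ − 1 − θ₀*)z + θ₀* has modulus at most r*. -/
theorem stmt_2 (lam2 lamN : ℝ) (h2 : 0 < lam2) (h2N : lam2 ≤ lamN)
    (rstar ε₀ θ₀ : ℝ)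
    (hr : rstar = (Real.sqrt lamN - Real.sqrt lam2) / (Real.sqrt lamN + Real.sqrt lam2))
    (hε₀ : ε₀ = 4 / (Real.sqrt lamN + Real.sqrt lam2) ^ 2)
    (hθ₀ : θ₀ = rstar ^ 2) :
    ∀ lam : ℝ, lam2 ≤ lam → lam ≤ lamN →
      ∀ z : ℂ, z ^ 2 + ((ε₀ * lam - 1 - θ₀ : ℝ) : ℂ) * z + ((θ₀ : ℝ) : ℂ) = 0 →
        ‖z‖ ≤ rstar := by
  intro lam hl2 hlN z hz
  have hrstar : 0 ≤ rstar := by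
    rw [hr]
    exact div_nonneg (sub_nonneg.mpr (Real.sqrt_le_sqrt h2N)) (by positivity)
  have hμ : ε₀ * lam ∈ Icc ((1 - rstar) ^ 2) ((1 + rstar) ^ 2) := by
    rw [hε₀, hr]
    exact four_div_sq_add_sqrt_mul_mem_Icc h2 h2N ⟨hl2, hlN⟩
  subst hθ₀
  have hnorm : ‖z‖ ^ 2 = rstar ^ 2 :=
    Complex.sq_norm_eq_of_discrim_nonpos (discrim_nonpos_of_mem_Icc hμ) hz
  exact ((sq_eq_sq₀ (norm_nonneg z) hrstar).mp hnorm).le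
end

section
/- Let M ≥ 1 be a natural number and 0 < α ≤ β real numbers. Set γ* = (√β − √α)/(√β + √α), ε₀ = 4/(√β + √α)², θ₀ = (γ*)², and define the parameters ε₁ = … = ε_M = 0, θ₁ = −θ₀, θ₂ = … = θ_M = 0. Then for every λ with α ≤ λ ≤ β, every complex root of p(z, λ) = z^{M+1} + (ε₀λ − 1 − θ₀)z^M + Σ_{m=1}^{M}(ε_mλ − θ_m)z^{M−m} has modulus at most γ*. -/
/-!
With these parameters every tap beyond the first vanishes, so
`p(z, λ) = z ^ (M - 1) * (z ^ 2 + b z + θ₀)` with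
`b = ε₀ λ - 1 - θ₀` real. The discriminant of the quadratic factor is
`16 (λ - α) (λ - β) / (√β + √α) ^ 4 ≤ 0`, and a real quadratic with nonpositive discriminant
has both roots on the circle `|z| ^ 2 = θ₀ = γ* ^ 2`.
-/

open Complex

theorem Complex.normSq_eq_of_quadratic_eq_zero {b c : ℝ} (hd : discrim 1 b c ≤ 0) {z : ℂ}
    (hz : z ^ 2 + b * z + c = 0) : normSq z = c := by
  have hre := congrArg re hz
  have him := congrArg im hz
  simp only [add_re, add_im, mul_re, mul_im, ofReal_re, ofReal_im, sq, zero_re,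
    zero_im] at hre him
  rw [discrim, mul_one] at hd
  rw [normSq_apply]
  rcases mul_eq_zero.mp (show z.im * (2 * z.re + b) = 0 by linarith) with hy | hx
  · have hx : 2 * z.re + b = 0 := by
      apply pow_eq_zero_iff two_ne_zero |>.mp
      nlinarith [sq_nonneg (2 * z.re + b)]
    rw [hy] at hre ⊢
    nlinarith
  · linear_combination -hre + z.re * hx

theorem discrim_oneTap_nonpos {a c lam : ℝ} (hca : c + a ≠ 0) (ha : a ^ 2 ≤ lam)
    (hc : lam ≤ c ^ 2) :
    discrim 1 (4 / (c + a) ^ 2 * lam - 1 - ((c - a) / (c + a)) ^ 2) (((c - a) / (c + a)) ^ 2)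
      ≤ 0 := by
  have hpos : 0 < (c + a) ^ 4 := by positivity
  have key : discrim 1 (4 / (c + a) ^ 2 * lam - 1 - ((c - a) / (c + a)) ^ 2)
      (((c - a) / (c + a)) ^ 2) = 16 * (lam - a ^ 2) * (lam - c ^ 2) / (c + a) ^ 4 := by
    rw [discrim]; field_simp; ring
  rw [key]
  exact div_nonpos_of_nonpos_of_nonneg
    (by nlinarith [mul_nonneg (sub_nonneg.2 ha) (sub_nonneg.2 hc)]) hpos.le

theorem sum_Icc_taps_eq_neg_first (M : ℕ) (hM : 1 ≤ M) (ε θ : ℕ → ℝ) (lam : ℝ) (z : ℂ)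
    (hε : ∀ m, 1 ≤ m → m ≤ M → ε m = 0) (hθ : ∀ m, 2 ≤ m → m ≤ M → θ m = 0) :
    ∑ m ∈ Finset.Icc 1 M, ((ε m * lam - θ m : ℝ) : ℂ) * z ^ (M - m) = -θ 1 * z ^ (M - 1) := by
  rw [Finset.sum_eq_single_of_mem 1 (Finset.mem_Icc.mpr ⟨le_rfl, hM⟩)]
  · rw [hε 1 le_rfl hM]; push_cast; ring
  · intro m hm hm1
    rw [Finset.mem_Icc] at hm
    rw [hε m hm.1 hm.2, hθ m (by omega) hm.2]
    simp

/-- With the one-tap optimal parameters embedded in the M-tap scheme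
(ε₁ = … = ε_M = 0, θ₁ = −θ₀, θ₂ = … = θ_M = 0), for every λ ∈ [α, β] every complex
root of p(z, λ) has modulus at most γ* = (√β − √α)/(√β + √α). -/
theorem stmt_6 (M : ℕ) (hM : 1 ≤ M) (α β : ℝ) (hα : 0 < α) (hαβ : α ≤ β)
    (γstar : ℝ) (hγ : γstar = (Real.sqrt β - Real.sqrt α) / (Real.sqrt β + Real.sqrt α))
    (ε θ : ℕ → ℝ)
    (hε0 : ε 0 = 4 / (Real.sqrt β + Real.sqrt α) ^ 2)
    (hεm : ∀ m, 1 ≤ m → m ≤ M → ε m = 0)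
    (hθ0 : θ 0 = γstar ^ 2)
    (hθ1 : θ 1 = -θ 0)
    (hθm : ∀ m, 2 ≤ m → m ≤ M → θ m = 0) :
    ∀ lam : ℝ, α ≤ lam → lam ≤ β →
      ∀ z : ℂ,
        z ^ (M + 1) + ((ε 0 * lam - 1 - θ 0 : ℝ) : ℂ) * z ^ M +
          ∑ m ∈ Finset.Icc 1 M, ((ε m * lam - θ m : ℝ) : ℂ) * z ^ (M - m) = 0 →
        ‖z‖ ≤ γstar := by
  intro lam hαlam hlamβ z hz
  have hγ0 : 0 ≤ γstar := by
    rw [hγ]; exact div_nonneg (sub_nonneg.2 (Real.sqrt_le_sqrt hαβ)) (by positivity)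
  have hd : discrim 1 (ε 0 * lam - 1 - θ 0) (θ 0) ≤ 0 := by
    rw [hε0, hθ0, hγ]
    refine discrim_oneTap_nonpos ?_ ?_ ?_
    · exact (add_pos_of_nonneg_of_pos (Real.sqrt_nonneg β) (Real.sqrt_pos.2 hα)).ne'
    · rwa [Real.sq_sqrt hα.le]
    · rwa [Real.sq_sqrt (hα.le.trans hαβ)]
  have hfactor : z ^ (M - 1) * (z ^ 2 + ((ε 0 * lam - 1 - θ 0 : ℝ) : ℂ) * z + (θ 0 : ℂ)) = 0 := by
    rw [← hz, sum_Icc_taps_eq_neg_first M hM ε θ lam z hεm hθm, hθ1]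
    obtain ⟨k, rfl⟩ := Nat.exists_eq_add_of_le' hM
    simp only [Nat.add_sub_cancel]
    push_cast
    ring
  rcases mul_eq_zero.mp hfactor with h | h
  · simpa [(pow_eq_zero_iff'.1 h).1] using hγ0
  · have hnorm := Complex.normSq_eq_of_quadratic_eq_zero hd h
    rw [hθ0, ← Complex.sq_norm] at hnorm
    exact ((pow_left_inj₀ (norm_nonneg z) hγ0 two_ne_zero).1 hnorm).le
end

section
/- Let M ≥ 1 be a natural number and 0 < α ≤ β real numbers. Let ε₀, …, ε_M, θ₀, …, θ_M be any real parameters with Σ_{m=0}^{M} θ_m = 0. Then there exists λ with α ≤ λ ≤ β such that some complex root of p(z, λ) = z^{M+1} + (ε₀λ − 1 − θ₀)z^M + Σ_{m=1}^{M}(ε_mλ − θ_m)z^{M−m} has modulus at least (√β − √α)/(√β + √α). -/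
/-!
Suppose every root of `p(·, λ) = f + λ g`, `λ ∈ [α, β]`, lies in the open disc of radius
`γ = (√β - √α) / (√β + √α)`. With `c = ((√α + √β) / 2) ^ 2`, the polynomial
`u = c (1 - z) (z - γ²) g` agrees with `z · c |1 - z|² · g` on the circle `|z| = γ`, and
`c |1 - z|²` ranges over `[α, β]` there. So along the linear homotopy from `z f + u` to
`z (f + α g)` every member is, on the circle, `z · p(z, λ)` for some `λ ∈ [α, β]`, and never
vanishes there; by the argument principle the number of roots inside the disc is constant.
But `z (f + α g)` has all its `deg f + 1` roots inside, whereas `z f + u` has degree at most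
`deg f + 1` and the root `z = 1` (this is where `Σ θ_m = 0` enters) outside.
-/

open Polynomial Complex Metric Set
open scoped Real

namespace Polynomial

variable {R : Type*} [CommRing R] [IsDomain R]

open scoped Classical in
noncomputable def rootCountIn (P : R[X]) (s : Set R) : ℕ :=
  Multiset.card (P.roots.filter (· ∈ s))

theorem rootCountIn_lt_natDegree {P : R[X]} {s : Set R} {a : R} (hP : P ≠ 0) (ha : P.IsRoot a)
    (has : a ∉ s) : P.rootCountIn s < P.natDegree := by
  classical
  have hlt : P.roots.filter (· ∈ s) < P.roots := by
    refine lt_of_le_of_ne (Multiset.filter_le _ _) fun h ↦ has ?_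
    have : a ∈ P.roots.filter (· ∈ s) := by rw [h]; exact (mem_roots hP).2 ha
    exact (Multiset.mem_filter.1 this).2
  exact (Multiset.card_lt_card hlt).trans_le (card_roots' P)

theorem rootCountIn_eq_natDegree {k : Type*} [Field k] [IsAlgClosed k] {P : k[X]} {s : Set k}
    (h : ∀ z, P.IsRoot z → z ∈ s) : P.rootCountIn s = P.natDegree := by
  classical
  rw [rootCountIn, Multiset.filter_eq_self.2 fun z hz ↦ h z (isRoot_of_mem_roots hz),
    IsAlgClosed.card_roots_eq_natDegree]

theorem natDegree_add_C_mul_of_natDegree_lt {S : Type*} [Semiring S] {f g : S[X]}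
    (hdeg : g.natDegree < f.natDegree) (a : S) : (f + C a * g).natDegree = f.natDegree :=
  natDegree_add_eq_left_of_natDegree_lt ((natDegree_C_mul_le a g).trans_lt hdeg)

end Polynomial

theorem circleIntegral_sub_inv_of_notMem_closedBall {c a : ℂ} {R : ℝ} (hR : 0 ≤ R)
    (ha : a ∉ closedBall c R) : ∮ z in C(c, R), (z - a)⁻¹ = 0 := by
  refine DiffContOnCl.circleIntegral_eq_zero hR (DifferentiableOn.diffContOnCl ?_)
  refine DifferentiableOn.mono ?_ closure_ball_subset_closedBall
  exact fun z hz ↦ ((differentiableAt_id.sub_const a).inv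
    (sub_ne_zero.2 (ne_of_mem_of_not_mem hz ha))).differentiableWithinAt

theorem circleIntegral_sub_inv_of_notMem_sphere {c a : ℂ} {R : ℝ} (hR : 0 < R)
    (ha : a ∉ sphere c R) [Decidable (a ∈ ball c R)] :
    ∮ z in C(c, R), (z - a)⁻¹ = if a ∈ ball c R then 2 * π * I else 0 := by
  split_ifs with h
  · exact circleIntegral.integral_sub_inv_of_mem_ball h
  · refine circleIntegral_sub_inv_of_notMem_closedBall hR.le fun h' ↦ ?_
    rw [← ball_union_sphere] at h'
    exact h'.elim h ha

open scoped Classical in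
theorem circleIntegral_multiset_sum_sub_inv {c : ℂ} {R : ℝ} (hR : 0 < R) (s : Multiset ℂ)
    (hs : ∀ a ∈ s, a ∉ sphere c R) :
    ∮ z in C(c, R), (s.map fun a ↦ (z - a)⁻¹).sum =
      2 * π * I * Multiset.card (s.filter (· ∈ ball c R)) := by
  induction s using Multiset.induction_on with
  | empty => simp [circleIntegral]
  | cons a s ih =>
    have ha := hs a (Multiset.mem_cons_self a s)
    have hs' := fun b hb ↦ hs b (Multiset.mem_cons_of_mem hb)
    have hint : CircleIntegrable (fun z ↦ (s.map fun b ↦ (z - b)⁻¹).sum) c R :=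
      (continuousOn_multiset_sum s fun b hb ↦ continuousOn_id.sub continuousOn_const |>.inv₀
        fun z hz ↦ sub_ne_zero.2 (ne_of_mem_of_not_mem hz (hs' b hb))).circleIntegrable hR.le
    simp only [Multiset.map_cons, Multiset.sum_cons]
    rw [circleIntegral.integral_add
      (circleIntegrable_sub_inv_iff.2 (.inr (by rwa [abs_of_pos hR]))) hint, ih hs',
      circleIntegral_sub_inv_of_notMem_sphere hR ha, Multiset.filter_cons]
    split_ifs <;> simp; ring

theorem continuousOn_circleIntegral {X E : Type*} [TopologicalSpace X] [NormedAddCommGroup E]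
    [NormedSpace ℂ E] {s : Set X} {c : ℂ} {R : ℝ} (hR : 0 ≤ R) {f : X → ℂ → E}
    (hf : ContinuousOn (Function.uncurry f) (s ×ˢ sphere c R)) :
    ContinuousOn (fun x ↦ ∮ z in C(c, R), f x z) s := by
  rw [continuousOn_iff_continuous_domRestrict]
  refine intervalIntegral.continuous_parametric_intervalIntegral_of_continuous' ?_ 0 (2 * π)
  have hmaps : MapsTo (fun p : s × ℝ ↦ ((p.1 : X), circleMap c R p.2)) univ (s ×ˢ sphere c R) :=
    fun p _ ↦ ⟨p.1.2, circleMap_mem_sphere c hR p.2⟩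
  have := hf.comp_continuous (by fun_prop) (fun p ↦ hmaps (mem_univ p))
  simp only [deriv_circleMap]
  exact ((continuous_circleMap 0 R).comp continuous_snd |>.mul continuous_const).smul this

namespace Polynomial

theorem circleIntegral_derivative_div_eq_rootCountIn {c : ℂ} {R : ℝ} (hR : 0 < R)
    (P : ℂ[X]) (hP : ∀ z ∈ sphere c R, P.eval z ≠ 0) :
    ∮ z in C(c, R), P.derivative.eval z / P.eval z = 2 * π * I * P.rootCountIn (ball c R) := by
  have hroots : ∀ a ∈ P.roots, a ∉ sphere c R := fun a ha has ↦ hP a has (isRoot_of_mem_roots ha)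
  rw [rootCountIn, ← circleIntegral_multiset_sum_sub_inv hR _ hroots]
  refine circleIntegral.integral_congr hR.le fun z hz ↦ ?_
  simp only [(IsAlgClosed.splits P).eval_derivative_div_eval_of_ne_zero (hP z hz), one_div]

/-- The root count is the continuous, integer-valued function `t ↦ (2πi)⁻¹ ∮ P_t' / P_t`,
hence constant along a homotopy that never vanishes on the circle. -/
theorem rootCountIn_ball_eq_of_forall_sphere {c : ℂ} {R : ℝ} (hR : 0 < R) (A B : ℂ[X])
    (h : ∀ t ∈ Icc (0 : ℝ) 1, ∀ z ∈ sphere c R, A.eval z + t * B.eval z ≠ 0) :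
    A.rootCountIn (ball c R) = (A + B).rootCountIn (ball c R) := by
  let N : ℝ → ℕ := fun t ↦ (A + C (t : ℂ) * B).rootCountIn (ball c R)
  have hN : EqOn (fun t : ℝ ↦ ((2 * π * I)⁻¹ * ∮ z in C(c, R),
      (A.derivative.eval z + t * B.derivative.eval z) / (A.eval z + t * B.eval z)).re)
      (fun t ↦ (N t : ℝ)) (Icc 0 1) := by
    intro t ht
    have harg := circleIntegral_derivative_div_eq_rootCountIn hR (A + C (t : ℂ) * B)
      (by simpa using h t ht)
    simp only [derivative_add, derivative_C_mul, eval_add, eval_mul, eval_C] at harg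
    dsimp only
    rw [harg, ← mul_assoc, inv_mul_cancel₀ (by simp [Real.pi_ne_zero]), one_mul]
    simp [N]
  have hcont : ContinuousOn N (Icc 0 1) := by
    rw [Nat.isClosedEmbedding_coe_real.isEmbedding.continuousOn_iff]
    refine ContinuousOn.congr ?_ hN.symm
    refine continuous_re.comp_continuousOn
      (continuousOn_const.mul (continuousOn_circleIntegral hR.le ?_))
    exact ContinuousOn.div (by fun_prop) (by fun_prop) fun p hp ↦ h p.1 hp.1 p.2 hp.2
  simpa [N] using isPreconnected_Icc.constant hcont (left_mem_Icc.2 zero_le_one)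
    (right_mem_Icc.2 zero_le_one)

end Polynomial

noncomputable def optimalRate (α β : ℝ) : ℝ := (√β - √α) / (√β + √α)

theorem optimalRate_pos {α β : ℝ} (hα : 0 ≤ α) (hαβ : α < β) : 0 < optimalRate α β :=
  div_pos (sub_pos.2 (Real.sqrt_lt_sqrt hα hαβ))
    (add_pos_of_pos_of_nonneg (Real.sqrt_pos.2 (hα.trans_lt hαβ)) (Real.sqrt_nonneg α))

theorem optimalRate_lt_one {α : ℝ} (β : ℝ) (hα : 0 < α) : optimalRate α β < 1 := by
  have hs := Real.sqrt_pos.2 hα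
  exact (div_lt_one (by positivity)).2 (by linarith)

theorem mul_norm_one_sub_sq_mem_Icc {α β : ℝ} (hα : 0 < α) (hαβ : α ≤ β) {w : ℂ}
    (hw : ‖w‖ = optimalRate α β) : ((√α + √β) / 2 * ‖1 - w‖) ^ 2 ∈ Icc α β := by
  have hs : 0 < √α := Real.sqrt_pos.2 hα
  have hlow : ‖(1 : ℂ)‖ - ‖w‖ ≤ ‖1 - w‖ := norm_sub_norm_le 1 w
  have hupp : ‖1 - w‖ ≤ ‖(1 : ℂ)‖ + ‖w‖ := norm_sub_le 1 w
  rw [norm_one, hw, optimalRate] at hlow hupp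
  have hsum : 0 < √α + √β := by positivity
  have hk : 0 ≤ (√α + √β) / 2 := by positivity
  have hs_eq : (√α + √β) / 2 * (1 - (√β - √α) / (√β + √α)) = √α := by field_simp; ring
  have hr_eq : (√α + √β) / 2 * (1 + (√β - √α) / (√β + √α)) = √β := by field_simp; ring
  constructor
  · calc α = ((√α + √β) / 2 * (1 - (√β - √α) / (√β + √α))) ^ 2 := by
          rw [hs_eq, Real.sq_sqrt hα.le]
      _ ≤ _ := pow_le_pow_left₀ (by rw [hs_eq]; exact hs.le) (mul_le_mul_of_nonneg_left hlow hk) 2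
  · calc _ ≤ ((√α + √β) / 2 * (1 + (√β - √α) / (√β + √α))) ^ 2 :=
          pow_le_pow_left₀ (by positivity) (mul_le_mul_of_nonneg_left hupp hk) 2
      _ = β := by rw [hr_eq, Real.sq_sqrt (hα.le.trans hαβ)]

theorem Complex.one_sub_mul_sub_norm_sq (w : ℂ) :
    (1 - w) * (w - ((‖w‖ ^ 2 : ℝ) : ℂ)) = w * ((‖1 - w‖ ^ 2 : ℝ) : ℂ) := by
  rw [← normSq_eq_norm_sq, ← normSq_eq_norm_sq, ← mul_conj, ← mul_conj, map_sub, map_one]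
  ring

noncomputable def homotopyCorrection (α β : ℝ) (g : ℂ[X]) : ℂ[X] :=
  C ((((√α + √β) / 2) ^ 2 : ℝ) : ℂ) * ((1 - X) * (X - C ((optimalRate α β ^ 2 : ℝ) : ℂ)) * g)

theorem eval_homotopyCorrection {α β : ℝ} (g : ℂ[X]) {w : ℂ} (hw : ‖w‖ = optimalRate α β) :
    (homotopyCorrection α β g).eval w =
      w * ((((√α + √β) / 2 * ‖1 - w‖) ^ 2 : ℝ) : ℂ) * g.eval w := by
  have := Complex.one_sub_mul_sub_norm_sq w
  rw [hw] at this
  simp only [homotopyCorrection, eval_mul, eval_sub, eval_one, eval_X, eval_C, this]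
  push_cast
  ring

theorem exists_eval_homotopy_eq_mul_eval {α β : ℝ} (hα : 0 < α) (hαβ : α ≤ β) (f g : ℂ[X])
    {t : ℝ} (ht : t ∈ Icc (0 : ℝ) 1) {w : ℂ} (hw : ‖w‖ = optimalRate α β) :
    ∃ lam ∈ Icc α β, (X * f + homotopyCorrection α β g).eval w +
        t * (C (α : ℂ) * X * g - homotopyCorrection α β g).eval w =
      w * (f + C (lam : ℂ) * g).eval w := by
  have hν := mul_norm_one_sub_sq_mem_Icc hα hαβ hw
  refine ⟨(1 - t) * ((√α + √β) / 2 * ‖1 - w‖) ^ 2 + t * α,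
    ⟨by nlinarith [ht.1, ht.2, hν.1], by nlinarith [ht.1, ht.2, hν.2]⟩, ?_⟩
  simp only [eval_add, eval_sub, eval_mul, eval_X, eval_C, eval_homotopyCorrection g hw]
  push_cast
  ring

theorem natDegree_X_mul_add_homotopyCorrection_le {f g : ℂ[X]} (hdeg : g.natDegree < f.natDegree)
    (α β : ℝ) : (X * f + homotopyCorrection α β g).natDegree ≤ f.natDegree + 1 := by
  have hquad : ((1 - X) * (X - C ((optimalRate α β ^ 2 : ℝ) : ℂ)) : ℂ[X]).natDegree ≤ 2 := by
    compute_degree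
  refine natDegree_add_le_of_degree_le (natDegree_mul_le.trans ?_)
    ((natDegree_C_mul_le _ _).trans (natDegree_mul_le.trans ?_))
  · rw [natDegree_X]; omega
  · omega

theorem Polynomial.exists_isRoot_norm_ge_of_lt {f g : ℂ[X]} (hdeg : g.natDegree < f.natDegree)
    (hf : f.IsRoot 1) {α β : ℝ} (hα : 0 < α) (hαβ : α < β) :
    ∃ lam ∈ Icc α β, ∃ z, (f + C (lam : ℂ) * g).IsRoot z ∧ optimalRate α β ≤ ‖z‖ := by
  by_contra! hsmall
  set γ := optimalRate α β
  have hγ0 : 0 < γ := optimalRate_pos hα.le hαβ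
  set A := X * f + homotopyCorrection α β g
  set B := C (α : ℂ) * X * g - homotopyCorrection α β g
  have hsphere : ∀ t ∈ Icc (0 : ℝ) 1, ∀ w ∈ sphere (0 : ℂ) γ, A.eval w + t * B.eval w ≠ 0 := by
    intro t ht w hw
    rw [mem_sphere_zero_iff_norm] at hw
    obtain ⟨lam, hlam, heq⟩ := exists_eval_homotopy_eq_mul_eval hα hαβ.le f g ht hw
    rw [heq]
    exact mul_ne_zero (norm_ne_zero_iff.1 (hw ▸ hγ0.ne')) fun hroot ↦
      (hsmall lam hlam w hroot).ne hw
  have hfα : (f + C (α : ℂ) * g).natDegree = f.natDegree :=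
    natDegree_add_C_mul_of_natDegree_lt hdeg _
  have hend : (A + B).rootCountIn (ball 0 γ) = f.natDegree + 1 := by
    have hAB : A + B = X * (f + C (α : ℂ) * g) := by simp only [A, B]; ring
    rw [hAB, rootCountIn_eq_natDegree, natDegree_X_mul (ne_zero_of_natDegree_gt (hfα ▸ hdeg)), hfα]
    intro z hz
    rw [IsRoot, eval_mul, eval_X, mul_eq_zero] at hz
    rcases hz with h | h
    · simpa [h] using hγ0
    · simpa using hsmall α (left_mem_Icc.2 hαβ.le) z h
  have hA0 : A ≠ 0 := fun h ↦ by
    simpa [h] using hsphere 0 (left_mem_Icc.2 zero_le_one) γ (by simp [abs_of_pos hγ0])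
  have hstart : A.rootCountIn (ball 0 γ) < A.natDegree :=
    rootCountIn_lt_natDegree (a := 1) hA0 (by simp [A, homotopyCorrection, hf.eq_zero])
      (by simpa using (optimalRate_lt_one β hα).le)
  have hAdeg : A.natDegree ≤ f.natDegree + 1 := natDegree_X_mul_add_homotopyCorrection_le hdeg α β
  have hcount := rootCountIn_ball_eq_of_forall_sphere hγ0 A B hsphere
  omega

theorem Polynomial.exists_isRoot_norm_ge {f g : ℂ[X]} (hdeg : g.natDegree < f.natDegree)
    (hf : f.IsRoot 1) {α β : ℝ} (hα : 0 < α) (hαβ : α ≤ β) :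
    ∃ lam ∈ Icc α β, ∃ z, (f + C (lam : ℂ) * g).IsRoot z ∧ optimalRate α β ≤ ‖z‖ := by
  rcases hαβ.eq_or_lt with rfl | hlt
  · have hpos : 0 < (f + C (α : ℂ) * g).degree := by
      rw [← natDegree_pos_iff_degree_pos, natDegree_add_C_mul_of_natDegree_lt hdeg]
      exact (Nat.zero_le _).trans_lt hdeg
    obtain ⟨z, hz⟩ := Complex.exists_root hpos
    exact ⟨α, left_mem_Icc.2 le_rfl, z, hz, by simp [optimalRate]⟩
  · exact exists_isRoot_norm_ge_of_lt hdeg hf hα hlt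

noncomputable def tapPoly (M : ℕ) (a : ℕ → ℝ) : ℂ[X] :=
  ∑ m ∈ Finset.range (M + 1), C (a m : ℂ) * X ^ (M - m)

/-- The characteristic polynomial `p(z, λ)` of the `M`-tap memory protocol. -/
noncomputable def memoryCharPoly (M : ℕ) (ε θ : ℕ → ℝ) (lam : ℝ) : ℂ[X] :=
  X ^ (M + 1) - X ^ M - tapPoly M θ + C (lam : ℂ) * tapPoly M ε

theorem natDegree_tapPoly_le (M : ℕ) (a : ℕ → ℝ) : (tapPoly M a).natDegree ≤ M :=
  natDegree_sum_le_of_forall_le _ _ fun _ _ ↦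
    (natDegree_C_mul_X_pow_le _ _).trans (Nat.sub_le _ _)

theorem natDegree_X_pow_succ_sub_X_pow_sub_tapPoly (M : ℕ) (θ : ℕ → ℝ) :
    (X ^ (M + 1) - X ^ M - tapPoly M θ : ℂ[X]).natDegree = M + 1 := by
  have h : (X ^ (M + 1) - X ^ M : ℂ[X]).natDegree = M + 1 := by
    rw [natDegree_sub_eq_left_of_natDegree_lt] <;> simp
  rw [natDegree_sub_eq_left_of_natDegree_lt] <;> rw [h]
  exact Nat.lt_succ_of_le (natDegree_tapPoly_le M θ)

theorem isRoot_one_X_pow_succ_sub_X_pow_sub_tapPoly (M : ℕ) {θ : ℕ → ℝ}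
    (hθ : ∑ m ∈ Finset.range (M + 1), θ m = 0) :
    (X ^ (M + 1) - X ^ M - tapPoly M θ : ℂ[X]).IsRoot 1 := by
  simp [tapPoly, eval_finsetSum, ← Complex.ofReal_sum, hθ]

theorem eval_memoryCharPoly (M : ℕ) (ε θ : ℕ → ℝ) (lam : ℝ) (z : ℂ) :
    (memoryCharPoly M ε θ lam).eval z =
      z ^ (M + 1) + ((ε 0 * lam - 1 - θ 0 : ℝ) : ℂ) * z ^ M +
        ∑ m ∈ Finset.Icc 1 M, ((ε m * lam - θ m : ℝ) : ℂ) * z ^ (M - m) := by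
  have hrange : Finset.range (M + 1) = insert 0 (Finset.Icc 1 M) := by
    ext m; simp; omega
  simp only [memoryCharPoly, tapPoly, eval_add, eval_sub, eval_mul, eval_pow, eval_X, eval_C,
    eval_finsetSum, hrange, Finset.sum_insert (by simp : 0 ∉ Finset.Icc 1 M)]
  have hsum : ∑ m ∈ Finset.Icc 1 M, ((ε m * lam - θ m : ℝ) : ℂ) * z ^ (M - m) =
      lam * ∑ m ∈ Finset.Icc 1 M, (ε m : ℂ) * z ^ (M - m) -
        ∑ m ∈ Finset.Icc 1 M, (θ m : ℂ) * z ^ (M - m) := by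
    rw [Finset.mul_sum, ← Finset.sum_sub_distrib]
    push_cast
    exact Finset.sum_congr rfl fun _ _ ↦ by ring
  rw [hsum, Nat.sub_zero]
  push_cast
  ring

theorem stmt_7_general (M : ℕ) (α β : ℝ) (hα : 0 < α) (hαβ : α ≤ β)
    (ε θ : ℕ → ℝ) (hθ : ∑ m ∈ Finset.range (M + 1), θ m = 0) :
    ∃ lam : ℝ, α ≤ lam ∧ lam ≤ β ∧
      ∃ z : ℂ,
        z ^ (M + 1) + ((ε 0 * lam - 1 - θ 0 : ℝ) : ℂ) * z ^ M +
          ∑ m ∈ Finset.Icc 1 M, ((ε m * lam - θ m : ℝ) : ℂ) * z ^ (M - m) = 0 ∧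
        (Real.sqrt β - Real.sqrt α) / (Real.sqrt β + Real.sqrt α) ≤ ‖z‖ := by
  have hdeg : (tapPoly M ε).natDegree < (X ^ (M + 1) - X ^ M - tapPoly M θ : ℂ[X]).natDegree := by
    rw [natDegree_X_pow_succ_sub_X_pow_sub_tapPoly]
    exact Nat.lt_succ_of_le (natDegree_tapPoly_le M ε)
  obtain ⟨lam, ⟨hlam₁, hlam₂⟩, z, hz, hnorm⟩ :=
    exists_isRoot_norm_ge hdeg (isRoot_one_X_pow_succ_sub_X_pow_sub_tapPoly M hθ) hα hαβ
  exact ⟨lam, hlam₁, hlam₂, z, eval_memoryCharPoly M ε θ lam z ▸ hz, hnorm⟩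

/-- worst-case lower bound for any M-tap memory scheme: for any
parameters with Σ_{m=0}^{M} θ_m = 0 there is λ ∈ [α, β] such that some root of
p(z, λ) has modulus at least (√β − √α)/(√β + √α). -/
theorem stmt_7 (M : ℕ) (hM : 1 ≤ M) (α β : ℝ) (hα : 0 < α) (hαβ : α ≤ β)
    (ε θ : ℕ → ℝ) (hθ : ∑ m ∈ Finset.range (M + 1), θ m = 0) :
    ∃ lam : ℝ, α ≤ lam ∧ lam ≤ β ∧
      ∃ z : ℂ,
        z ^ (M + 1) + ((ε 0 * lam - 1 - θ 0 : ℝ) : ℂ) * z ^ M +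
          ∑ m ∈ Finset.Icc 1 M, ((ε m * lam - θ m : ℝ) : ℂ) * z ^ (M - m) = 0 ∧
        (Real.sqrt β - Real.sqrt α) / (Real.sqrt β + Real.sqrt α) ≤ ‖z‖ :=
  stmt_7_general M α β hα hαβ ε θ hθ
end

section
/- Let μ be a real number with 0 < μ < 1 and define h(r) = r³ − 3μr² + 3r − μ. Then h has a unique real root, and this root lies in the open interval (0, 1). -/
/-- for 0 < μ < 1 the cubic h(r) = r³ − 3μr² + 3r − μ has a unique
real root, and this root lies in (0, 1). -/
theorem stmt_13 (μ : ℝ) (hμ0 : 0 < μ) (hμ1 : μ < 1) :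
    ∃ r : ℝ, (r ^ 3 - 3 * μ * r ^ 2 + 3 * r - μ = 0 ∧ 0 < r ∧ r < 1) ∧
      ∀ s : ℝ, s ^ 3 - 3 * μ * s ^ 2 + 3 * s - μ = 0 → s = r := by
  set f : ℝ → ℝ := fun r => r ^ 3 - 3 * μ * r ^ 2 + 3 * r - μ with hf
  have hmono : StrictMono f := by
    intro a b hab
    have h1 : f b - f a = (b - a) * (b ^ 2 + a * b + a ^ 2 - 3 * μ * (a + b) + 3) := by
      simp only [hf]; ring
    have h2 : 0 < b ^ 2 + a * b + a ^ 2 - 3 * μ * (a + b) + 3 := by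
      nlinarith [sq_nonneg (a + b - 2 * μ), sq_nonneg (a - b), sq_nonneg (a + b), sq_nonneg μ]
    nlinarith [mul_pos (sub_pos.mpr hab) h2]
  have hcont : ContinuousOn f (Set.Icc 0 1) := by fun_prop
  have h0 : f 0 < 0 := by simp only [hf]; nlinarith
  have h1 : 0 < f 1 := by simp only [hf]; nlinarith
  have := intermediate_value_Ioo (le_of_lt one_pos) hcont
  have hmem : (0 : ℝ) ∈ Set.Ioo (f 0) (f 1) := ⟨h0, h1⟩
  obtain ⟨r, hr, hfr⟩ := this hmem
  exact ⟨r, ⟨hfr, hr.1, hr.2⟩, fun s hs => hmono.injective (hs.trans hfr.symm)⟩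
end

section
/- Let N ≥ 3 be a natural number, μ = (N−1)/(N+1), h(r) = r³ − 3μr² + 3r − μ, and let r̃₂ be the unique real root of h. Then r̃₂ < (√N − 1)/(√N + 1). -/
/-- for the star network on N ≥ 3 nodes, the unique real root r̃₂ of
h(r) = r³ − 3μr² + 3r − μ with μ = (N−1)/(N+1) satisfies r̃₂ < (√N − 1)/(√N + 1). -/
theorem stmt_14 (N : ℕ) (hN : 3 ≤ N) (μ : ℝ) (hμ : μ = ((N : ℝ) - 1) / ((N : ℝ) + 1))
    (r : ℝ) (hroot : r ^ 3 - 3 * μ * r ^ 2 + 3 * r - μ = 0)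
    (huniq : ∀ s : ℝ, s ^ 3 - 3 * μ * s ^ 2 + 3 * s - μ = 0 → s = r) :
    r < (Real.sqrt N - 1) / (Real.sqrt N + 1) := by
  clear huniq
  set s : ℝ := Real.sqrt N with hs
  have hNr : (3 : ℝ) ≤ (N : ℝ) := by exact_mod_cast hN
  have hs2 : s ^ 2 = (N : ℝ) := Real.sq_sqrt (by linarith)
  have hs1 : 1 < s := by
    nlinarith [Real.sqrt_nonneg (N : ℝ)]
  set t : ℝ := (s - 1) / (s + 1) with htdef
  have hsp : (0 : ℝ) < s + 1 := by linarith
  have hsq : (0 : ℝ) < s ^ 2 + 1 := by positivity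
  have hμ' : μ = (s ^ 2 - 1) / (s ^ 2 + 1) := by rw [hμ, ← hs2]
  have hμpos : 0 < μ := by
    rw [hμ']; apply div_pos <;> nlinarith
  have hμlt : μ < 1 := by
    rw [hμ', div_lt_one hsq]; linarith
  -- h(t) > 0
  have ht : 0 < t ^ 3 - 3 * μ * t ^ 2 + 3 * t - μ := by
    rw [htdef, hμ']
    rw [div_pow, div_pow]
    have h1 : (s + 1) ^ 3 ≠ 0 := by positivity
    have h2 : (s + 1) ^ 2 ≠ 0 := by positivity
    have h3 : s ^ 2 + 1 ≠ 0 := by positivity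
    have key : (s - 1) ^ 3 / (s + 1) ^ 3 - 3 * ((s ^ 2 - 1) / (s ^ 2 + 1)) * ((s - 1) ^ 2 / (s + 1) ^ 2) + 3 * ((s - 1) / (s + 1)) - (s ^ 2 - 1) / (s ^ 2 + 1)
        = 8 * s ^ 2 * (s - 1) / ((s + 1) ^ 3 * (s ^ 2 + 1)) := by
      field_simp
      ring
    rw [key]
    apply div_pos
    · nlinarith
    · positivity
  -- if t ≤ r, contradiction via monotonicity
  by_contra hc
  push_neg at hc
  have hQ : 0 < r ^ 2 + r * t + t ^ 2 - 3 * μ * (r + t) + 3 := by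
    nlinarith [sq_nonneg (2 * r + t - 3 * μ), sq_nonneg (t - μ), sq_nonneg μ]
  have hrt : 0 ≤ r - t := by linarith
  nlinarith [mul_nonneg hrt hQ.le]
end

section
/- Let N ≥ 2 be a natural number, μ = (N−1)/(N+1), and r₁* = (√N − 1)/(√N + 1). Then (r₁*)³ − 3μ(r₁*)² + 3r₁* − μ = 8(√N − 1)N / ((√N + 1)³(N + 1)), and in particular this quantity is strictly positive for N ≥ 2. -/
/-- with μ = (N−1)/(N+1) and r₁* = (√N − 1)/(√N + 1),
h(r₁*) = 8(√N − 1)N / ((√N + 1)³(N + 1)), which is strictly positive for N ≥ 2. -/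
theorem stmt_15 (N : ℕ) (hN : 2 ≤ N) (μ r : ℝ)
    (hμ : μ = ((N : ℝ) - 1) / ((N : ℝ) + 1))
    (hr : r = (Real.sqrt N - 1) / (Real.sqrt N + 1)) :
    r ^ 3 - 3 * μ * r ^ 2 + 3 * r - μ =
        8 * (Real.sqrt N - 1) * N / ((Real.sqrt N + 1) ^ 3 * ((N : ℝ) + 1)) ∧
      0 < r ^ 3 - 3 * μ * r ^ 2 + 3 * r - μ := by
  have hN1 : (1 : ℝ) < N := by exact_mod_cast Nat.lt_of_lt_of_le Nat.one_lt_two hN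
  have hs2 : Real.sqrt N ^ 2 = N := Real.sq_sqrt (by positivity)
  have hs1 : 1 < Real.sqrt N := by
    nlinarith [Real.sqrt_nonneg (N : ℝ)]
  set s := Real.sqrt N with hsdef
  have hsp : (0 : ℝ) < s + 1 := by linarith
  have hNp : (0 : ℝ) < (N : ℝ) + 1 := by linarith
  have heq : r ^ 3 - 3 * μ * r ^ 2 + 3 * r - μ =
      8 * (s - 1) * N / ((s + 1) ^ 3 * ((N : ℝ) + 1)) := by
    rw [hμ, hr, ← hs2]
    have h2 : s^2 + 1 > 0 := by positivity
    field_simp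
    ring
  refine ⟨heq, ?_⟩
  rw [heq]
  apply div_pos
  · have : (0:ℝ) < (N:ℝ) := by linarith
    nlinarith
  · positivity
end

section
/- Let N ≥ 3 be a natural number and let r ∈ (0, 1) satisfy r³ − 3μr² + 3r − μ = 0 where μ = (N−1)/(N+1). Define ε₀ = 6r/(N−1), ε₁ = 0, ε₂ = 2r³/(N−1), θ₀ = 8r²/(r² + 3), θ₁ = −3r², θ₂ = 3r² − 8r²/(r² + 3). Then for each λ ∈ {1, N}, every complex root of the cubic z³ + (ε₀λ − 1 − θ₀)z² + (ε₁λ + θ₀ + θ₂)z + (ε₂λ − θ₂) has modulus at most r. -/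
/-!
Writing μ = (N - 1)/(N + 1) and using (1 ± r)³ = 1 ± 3r + 3r² ± r³, the equation for the rate r
becomes (1 + r)³ = N (1 - r)³. With this identity the prescribed parameters make the cubic equal to
z³ - 3tr z² + 3r² z - tr³ with t = (N + 1 - 2λ)/(N - 1), and t = 1 at λ = 1, t = -1 at λ = N.
For t = ±1 this is (z - tr)³, so the only root is ±r.
-/

section StarRate

variable {n r : ℝ}

theorem cube_one_add_eq_mul_cube_one_sub (hn : n + 1 ≠ 0)
    (hroot : r ^ 3 - 3 * ((n - 1) / (n + 1)) * r ^ 2 + 3 * r - (n - 1) / (n + 1) = 0) :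
    (1 + r) ^ 3 = n * (1 - r) ^ 3 := by
  field_simp at hroot
  linear_combination hroot

theorem sub_one_ne_zero_of_cube_one_add_eq (hr : r ≠ 0)
    (hkey : (1 + r) ^ 3 = n * (1 - r) ^ 3) :
    n - 1 ≠ 0 := by
  intro hn
  obtain rfl : n = 1 := by linarith
  have : r * (r ^ 2 + 3) = 0 := by linear_combination hkey / 2
  exact hr (by simpa [show r ^ 2 + 3 ≠ 0 by positivity] using this)

theorem twoTap_coeff_sq_eq (hn : n - 1 ≠ 0) (hkey : (1 + r) ^ 3 = n * (1 - r) ^ 3) (lam : ℝ) :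
    6 * r / (n - 1) * lam - 1 - 8 * r ^ 2 / (r ^ 2 + 3) =
      -3 * r * ((n + 1 - 2 * lam) / (n - 1)) := by
  field_simp
  linear_combination 3 * hkey

theorem twoTap_coeff_const_eq (hn : n - 1 ≠ 0) (hkey : (1 + r) ^ 3 = n * (1 - r) ^ 3) (lam : ℝ) :
    2 * r ^ 3 / (n - 1) * lam - (3 * r ^ 2 - 8 * r ^ 2 / (r ^ 2 + 3)) =
      -r ^ 3 * ((n + 1 - 2 * lam) / (n - 1)) := by
  field_simp
  linear_combination r ^ 2 * hkey

end StarRate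

theorem norm_eq_of_perfect_cube_eq_zero {z : ℂ} {r t : ℝ} (hr : 0 ≤ r) (ht : t ^ 2 = 1)
    (hz : z ^ 3 + ((-3 * r * t : ℝ) : ℂ) * z ^ 2 + ((3 * r ^ 2 : ℝ) : ℂ) * z
      + ((-r ^ 3 * t : ℝ) : ℂ) = 0) :
    ‖z‖ = r := by
  have hcube : (z - (t * r : ℝ)) ^ 3 = 0 := by
    have ht' : (t : ℂ) ^ 2 = 1 := by exact_mod_cast ht
    push_cast at hz ⊢
    linear_combination hz + (3 * (r : ℂ) ^ 2 * z - (r : ℂ) ^ 3 * t) * ht'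
  have ht_abs : |t| = 1 := by rcases sq_eq_one_iff.mp ht with rfl | rfl <;> norm_num
  rw [sub_eq_zero.mp (pow_eq_zero_iff three_ne_zero |>.mp hcube), Complex.norm_real,
    Real.norm_eq_abs, abs_mul, ht_abs, one_mul, abs_of_nonneg hr]

theorem stmt_16_general (N : ℕ) (r : ℝ) (hr0 : 0 < r)
    (hroot : r ^ 3 - 3 * (((N : ℝ) - 1) / ((N : ℝ) + 1)) * r ^ 2 + 3 * r
        - ((N : ℝ) - 1) / ((N : ℝ) + 1) = 0)
    (ε₀ ε₁ ε₂ θ₀ θ₂ : ℝ)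
    (hε₀ : ε₀ = 6 * r / ((N : ℝ) - 1)) (hε₁ : ε₁ = 0)
    (hε₂ : ε₂ = 2 * r ^ 3 / ((N : ℝ) - 1))
    (hθ₀ : θ₀ = 8 * r ^ 2 / (r ^ 2 + 3))
    (hθ₂ : θ₂ = 3 * r ^ 2 - 8 * r ^ 2 / (r ^ 2 + 3)) :
    ∀ lam : ℝ, lam = 1 ∨ lam = (N : ℝ) →
      ∀ z : ℂ,
        z ^ 3 + ((ε₀ * lam - 1 - θ₀ : ℝ) : ℂ) * z ^ 2 +
            ((ε₁ * lam + θ₀ + θ₂ : ℝ) : ℂ) * z + ((ε₂ * lam - θ₂ : ℝ) : ℂ) = 0 →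
        ‖z‖ ≤ r := by
  intro lam hlam z hz
  have hkey := cube_one_add_eq_mul_cube_one_sub (by positivity) hroot
  have hN1 := sub_one_ne_zero_of_cube_one_add_eq hr0.ne' hkey
  have ht : ((N + 1 - 2 * lam) / (N - 1)) ^ 2 = 1 := by
    rcases hlam with rfl | rfl <;> field_simp <;> ring
  subst hε₀ hε₁ hε₂ hθ₀ hθ₂
  rw [twoTap_coeff_sq_eq hN1 hkey, twoTap_coeff_const_eq hN1 hkey,
    show 0 * lam + 8 * r ^ 2 / (r ^ 2 + 3) + (3 * r ^ 2 - 8 * r ^ 2 / (r ^ 2 + 3)) = 3 * r ^ 2 by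
      ring] at hz
  exact (norm_eq_of_perfect_cube_eq_zero hr0.le ht hz).le

/-- achievability of the two-tap rate on star networks: with the
parameters of Theorem 3(i), for each λ ∈ {1, N} every complex root of the cubic
z³ + (ε₀λ − 1 − θ₀)z² + (ε₁λ + θ₀ + θ₂)z + (ε₂λ − θ₂) has modulus at most r. -/
theorem stmt_16 (N : ℕ) (hN : 3 ≤ N) (r : ℝ) (hr0 : 0 < r) (hr1 : r < 1)
    (hroot : r ^ 3 - 3 * (((N : ℝ) - 1) / ((N : ℝ) + 1)) * r ^ 2 + 3 * r
        - ((N : ℝ) - 1) / ((N : ℝ) + 1) = 0)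
    (ε₀ ε₁ ε₂ θ₀ θ₁ θ₂ : ℝ)
    (hε₀ : ε₀ = 6 * r / ((N : ℝ) - 1)) (hε₁ : ε₁ = 0)
    (hε₂ : ε₂ = 2 * r ^ 3 / ((N : ℝ) - 1))
    (hθ₀ : θ₀ = 8 * r ^ 2 / (r ^ 2 + 3)) (hθ₁ : θ₁ = -3 * r ^ 2)
    (hθ₂ : θ₂ = 3 * r ^ 2 - 8 * r ^ 2 / (r ^ 2 + 3)) :
    ∀ lam : ℝ, lam = 1 ∨ lam = (N : ℝ) →
      ∀ z : ℂ,
        z ^ 3 + ((ε₀ * lam - 1 - θ₀ : ℝ) : ℂ) * z ^ 2 +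
            ((ε₁ * lam + θ₀ + θ₂ : ℝ) : ℂ) * z + ((ε₂ * lam - θ₂ : ℝ) : ℂ) = 0 →
        ‖z‖ ≤ r :=
  stmt_16_general N r hr0 hroot ε₀ ε₁ ε₂ θ₀ θ₂ hε₀ hε₁ hε₂ hθ₀ hθ₂
end

section
/- Let N > 1 and r > 0 be real numbers, and let ε₀, ε₁, ε₂, θ₀, θ₂ be real parameters. For λ ∈ {1, N} define f₀(λ) = r³ + (ε₀λ − 1 − θ₀)r² + (ε₁λ + θ₀ + θ₂)r + (ε₂λ − θ₂), f₁(λ) = 3r³ + (ε₀λ − 1 − θ₀)r² − (ε₁λ + θ₀ + θ₂)r − 3(ε₂λ − θ₂), f₂(λ) = 3r³ − (ε₀λ − 1 − θ₀)r² − (ε₁λ + θ₀ + θ₂)r + 3(ε₂λ − θ₂), f₃(λ) = r³ − (ε₀λ − 1 − θ₀)r² + (ε₁λ + θ₀ + θ₂)r − (ε₂λ − θ₂). If f₀(1) ≥ 0, f₁(1) ≥ 0, f₁(N) ≥ 0, f₂(1) ≥ 0, f₂(N) ≥ 0, and f₃(N) ≥ 0, then ε₀ ≤ 6r/(N − 1).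 -/
/-- nonnegativity of the six Routh–Hurwitz coefficients listed in the
paper forces ε₀ ≤ 6r/(N − 1). -/
theorem stmt_17 (N r : ℝ) (hN : 1 < N) (hr : 0 < r) (ε₀ ε₁ ε₂ θ₀ θ₂ : ℝ)
    (f₀ f₁ f₂ f₃ : ℝ → ℝ)
    (hf₀ : ∀ lam, f₀ lam = r ^ 3 + (ε₀ * lam - 1 - θ₀) * r ^ 2
        + (ε₁ * lam + θ₀ + θ₂) * r + (ε₂ * lam - θ₂))
    (hf₁ : ∀ lam, f₁ lam = 3 * r ^ 3 + (ε₀ * lam - 1 - θ₀) * r ^ 2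
        - (ε₁ * lam + θ₀ + θ₂) * r - 3 * (ε₂ * lam - θ₂))
    (hf₂ : ∀ lam, f₂ lam = 3 * r ^ 3 - (ε₀ * lam - 1 - θ₀) * r ^ 2
        - (ε₁ * lam + θ₀ + θ₂) * r + 3 * (ε₂ * lam - θ₂))
    (hf₃ : ∀ lam, f₃ lam = r ^ 3 - (ε₀ * lam - 1 - θ₀) * r ^ 2
        + (ε₁ * lam + θ₀ + θ₂) * r - (ε₂ * lam - θ₂))
    (h01 : f₀ 1 ≥ 0) (h11 : f₁ 1 ≥ 0) (h1N : f₁ N ≥ 0)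
    (h21 : f₂ 1 ≥ 0) (h2N : f₂ N ≥ 0) (h3N : f₃ N ≥ 0) :
    ε₀ ≤ 6 * r / (N - 1) := by
  rw [hf₀ 1] at h01
  rw [hf₁ 1] at h11; rw [hf₁ N] at h1N
  rw [hf₂ 1] at h21; rw [hf₂ N] at h2N
  rw [hf₃ N] at h3N
  rw [le_div_iff₀ (by linarith : (0:ℝ) < N - 1)]
  have hkey : ε₀ * (N - 1) * r ^ 2 ≤ 6 * r * r ^ 2 := by nlinarith
  have hr2 : (0:ℝ) < r ^ 2 := by positivity
  exact le_of_mul_le_mul_right hkey hr2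
end

section
/- Let a, b be real numbers with 0 < a < b. Then (√b − √a)/(√b + √a) < (b − a)/(b + 3a). -/
/-- for 0 < a < b, (√b − √a)/(√b + √a) < (b − a)/(b + 3a). -/
theorem stmt_19 (a b : ℝ) (ha : 0 < a) (hab : a < b) :
    (Real.sqrt b - Real.sqrt a) / (Real.sqrt b + Real.sqrt a) < (b - a) / (b + 3 * a) := by
  have hb : 0 < b := ha.trans hab
  have hs : 0 < Real.sqrt a := Real.sqrt_pos.2 ha
  have hst : Real.sqrt a < Real.sqrt b := Real.sqrt_lt_sqrt ha.le hab
  have hsa : Real.sqrt a ^ 2 = a := Real.sq_sqrt ha.le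
  have hsb : Real.sqrt b ^ 2 = b := Real.sq_sqrt hb.le
  rw [div_lt_div_iff₀ (by linarith) (by linarith)]
  nlinarith [sq_nonneg (Real.sqrt b - Real.sqrt a), mul_pos hs (sub_pos.2 hst),
    mul_pos (mul_pos hs hs) (sub_pos.2 hst)]
end
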